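/- Let L = n·m with integers n, m ≥ 1. For i ∈ {1,…,L} define row(i) = ⌈i/m⌉ and col(i) = i − (row(i)−1)·m. Define Ω_i^0 = { j ∈ {1,…,i} : row(j) = row(i) or col(j) = col(i) } and, for each r ∈ {1,…,m} with r ≠ col(i), Ω_i^r = { j ∈ {1,…,L} : col(j) = r and j ≤ i − col(i) }. Then Ω_i^0 and the sets Ω_i^r are pairwise disjoint and their union equals {1,…,i}. -/
import Mathlib


open Finset

lemma ca_rowcol (m : ℕ) (hm : 1 ≤ m) (row col : ℕ → ℕ)
    (hrow : ∀ i, row i = (i + m - 1) / m)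
    (hcol : ∀ i, col i = i - (row i - 1) * m)
    (j : ℕ) (hj : 1 ≤ j) :
    row j = (j - 1) / m + 1 ∧ col j = (j - 1) % m + 1 := by
  have hr : row j = (j - 1) / m + 1 := by
    rw [hrow]
    have h1 : j + m - 1 = (j - 1) + m := by omega
    rw [h1, Nat.add_div_right _ hm]
  have hdm := Nat.div_add_mod' (j - 1) m
  have hc : col j = (j - 1) % m + 1 := by
    rw [hcol, hr]
    simp only [Nat.add_sub_cancel]
    omega
  exact ⟨hr, hc⟩

lemma ca_lt (m : ℕ) (hm : 1 ≤ m) {qj sj qi : ℕ} (hs : sj < m) (h : qj < qi) :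
    qj * m + sj + 1 ≤ qi * m := by
  have := Nat.mul_le_mul_right m h
  calc qj * m + sj + 1 ≤ qj * m + m := by omega
    _ = (qj + 1) * m := by ring
    _ ≤ qi * m := Nat.mul_le_mul_right m h

/-- Combiner-Axial vertical factorization (LM case) on an `n × m` grid with
`L = n·m`, `row i = ⌈i/m⌉`, `col i = i − (row i − 1)·m`: for each position
`i ∈ {1,…,L}`, the direct block `Ω_i^0` (earlier positions in the same row or
same column) and the column blocks `Ω_i^r` (entries of column `r ≠ col i` with
index at most `i − col i`) are pairwise disjoint and their union is `{1,…,i}`. -/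
theorem combiner_axial_vertical (n m L : ℕ) (hn : 1 ≤ n) (hm : 1 ≤ m)
    (hL : L = n * m)
    (row col : ℕ → ℕ)
    (hrow : ∀ i, row i = (i + m - 1) / m)
    (hcol : ∀ i, col i = i - (row i - 1) * m) :
    ∀ i ∈ Finset.Icc 1 L,
      (∀ r ∈ (Finset.Icc 1 m).filter (fun r => r ≠ col i),
          Disjoint ((Finset.Icc 1 i).filter (fun j => row j = row i ∨ col j = col i))
                   ((Finset.Icc 1 L).filter (fun j => col j = r ∧ j ≤ i - col i))) ∧
      (∀ r₁ ∈ (Finset.Icc 1 m).filter (fun r => r ≠ col i),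
        ∀ r₂ ∈ (Finset.Icc 1 m).filter (fun r => r ≠ col i), r₁ ≠ r₂ →
          Disjoint ((Finset.Icc 1 L).filter (fun j => col j = r₁ ∧ j ≤ i - col i))
                   ((Finset.Icc 1 L).filter (fun j => col j = r₂ ∧ j ≤ i - col i))) ∧
      (((Finset.Icc 1 i).filter (fun j => row j = row i ∨ col j = col i)) ∪
          ((Finset.Icc 1 m).filter (fun r => r ≠ col i)).biUnion
            (fun r => (Finset.Icc 1 L).filter (fun j => col j = r ∧ j ≤ i - col i))
        = Finset.Icc 1 i) := by
  intro i hi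
  simp only [Finset.mem_Icc] at hi
  obtain ⟨hi1, hiL⟩ := hi
  obtain ⟨hri, hci⟩ := ca_rowcol m hm row col hrow hcol i hi1
  have hdmi := Nat.div_add_mod' (i - 1) m
  have hmi : (i - 1) % m < m := Nat.mod_lt _ (by omega)
  -- i - col i = ((i-1)/m) * m
  have hisub : i - col i = (i - 1) / m * m := by omega
  refine ⟨?_, ?_, ?_⟩
  · intro r hr
    simp only [Finset.mem_filter, Finset.mem_Icc] at hr
    rw [Finset.disjoint_left]
    intro j hj hj2
    simp only [Finset.mem_filter, Finset.mem_Icc] at hj hj2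
    obtain ⟨⟨hj1, hji⟩, hrc⟩ := hj
    obtain ⟨⟨_, _⟩, hcr, hle⟩ := hj2
    obtain ⟨hrj, hcj⟩ := ca_rowcol m hm row col hrow hcol j hj1
    have hdmj := Nat.div_add_mod' (j - 1) m
    have hmj : (j - 1) % m < m := Nat.mod_lt _ (by omega)
    rcases hrc with h | h
    · -- same row but j ≤ i - col i : contradiction
      have hq : (j - 1) / m = (i - 1) / m := by omega
      have hq' : (j - 1) / m * m = (i - 1) / m * m := by rw [hq]
      omega
    · exact hr.2 (by omega)
  · intro r₁ hr₁ r₂ hr₂ hne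
    rw [Finset.disjoint_left]
    intro j hj hj2
    simp only [Finset.mem_filter, Finset.mem_Icc] at hj hj2
    exact hne (hj.2.1 ▸ hj2.2.1 ▸ rfl)
  · ext j
    simp only [Finset.mem_union, Finset.mem_biUnion, Finset.mem_filter, Finset.mem_Icc]
    constructor
    · rintro (⟨⟨hj1, hji⟩, _⟩ | ⟨r, _, ⟨hj1, _⟩, _, hle⟩)
      · exact ⟨hj1, hji⟩
      · exact ⟨hj1, by omega⟩
    · rintro ⟨hj1, hji⟩
      obtain ⟨hrj, hcj⟩ := ca_rowcol m hm row col hrow hcol j hj1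
      have hdmj := Nat.div_add_mod' (j - 1) m
      have hmj : (j - 1) % m < m := Nat.mod_lt _ (by omega)
      by_cases hcase : row j = row i ∨ col j = col i
      · exact Or.inl ⟨⟨hj1, hji⟩, hcase⟩
      · push_neg at hcase
        obtain ⟨hr, hc⟩ := hcase
        have hqlt : (j - 1) / m < (i - 1) / m := by
          have := Nat.div_le_div_right (c := m) (by omega : j - 1 ≤ i - 1)
          omega
        have hkey := ca_lt m hm (qj := (j-1)/m) (sj := (j-1)%m) (qi := (i-1)/m) hmj hqlt
        refine Or.inr ⟨col j, ⟨⟨by omega, by omega⟩, by omega⟩, ⟨hj1, by omega⟩, rfl, by omega⟩
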